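/- Let K, H ∈ ℝ and T > 0. Suppose w : [0,T] → ℝ is twice continuously differentiable with w(0) = 1, w'(0) ≤ −H, w''(r) + K·w(r) ≤ 0 for all r ∈ [0,T], and w(r) > 0 for all r ∈ [0,T). Then the function φ_{K,H}(r) = s_K'(r) − H·s_K(r) is strictly positive for all r ∈ [0,T). -/

import Mathlib

/-- The model function `s_K`: solution of `s'' + K s = 0` with `s(0)=0`, `s'(0)=1`. -/
noncomputable def sK (K : ℝ) : ℝ → ℝ := fun r =>
  if 0 < K then Real.sin (r * Real.sqrt K) / Real.sqrt K
  else if K = 0 then r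
  else Real.sinh (r * Real.sqrt |K|) / Real.sqrt |K|

/-- `φ_{K,H}(r) = s_K'(r) − H·s_K(r)`. -/
noncomputable def phiKH (K H : ℝ) : ℝ → ℝ := fun r => deriv (sK K) r - H * sK K r

/-- The derivative of `sK`. -/
noncomputable def sKd (K : ℝ) : ℝ → ℝ := fun r =>
  if 0 < K then Real.cos (r * Real.sqrt K)
  else if K = 0 then 1
  else Real.cosh (r * Real.sqrt |K|)

lemma hasDerivAt_sK (K r : ℝ) : HasDerivAt (sK K) (sKd K r) r := by
  rcases lt_trichotomy K 0 with hK | hK | hK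
  · have h1 : ¬ (0 < K) := by linarith
    have h2 : K ≠ 0 := ne_of_lt hK
    have hc : Real.sqrt |K| ≠ 0 := by
      have : 0 < |K| := abs_pos.mpr h2
      positivity
    unfold sK sKd
    simp only [if_neg h1, if_neg h2]
    have h3 : HasDerivAt (fun r : ℝ => r * Real.sqrt |K|) (Real.sqrt |K|) r := by
      simpa using (hasDerivAt_id r).mul_const (Real.sqrt |K|)
    have h4 := (Real.hasDerivAt_sinh (r * Real.sqrt |K|)).comp r h3
    have h5 : HasDerivAt (fun x : ℝ => Real.sinh (x * Real.sqrt |K|) / Real.sqrt |K|)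
        (Real.cosh (r * Real.sqrt |K|) * Real.sqrt |K| / Real.sqrt |K|) r := by
      simpa [Function.comp] using h4.div_const (Real.sqrt |K|)
    rwa [mul_div_assoc, div_self hc, mul_one] at h5
  · subst hK
    unfold sK sKd
    norm_num
    exact hasDerivAt_id r
  · have hc : Real.sqrt K ≠ 0 := by positivity
    unfold sK sKd
    simp only [if_pos hK]
    have h3 : HasDerivAt (fun r : ℝ => r * Real.sqrt K) (Real.sqrt K) r := by
      simpa using (hasDerivAt_id r).mul_const (Real.sqrt K)
    have h4 := (Real.hasDerivAt_sin (r * Real.sqrt K)).comp r h3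
    have h5 : HasDerivAt (fun x : ℝ => Real.sin (x * Real.sqrt K) / Real.sqrt K)
        (Real.cos (r * Real.sqrt K) * Real.sqrt K / Real.sqrt K) r := by
      simpa [Function.comp] using h4.div_const (Real.sqrt K)
    rwa [mul_div_assoc, div_self hc, mul_one] at h5

lemma hasDerivAt_sKd (K r : ℝ) : HasDerivAt (sKd K) (-K * sK K r) r := by
  rcases lt_trichotomy K 0 with hK | hK | hK
  · have h1 : ¬ (0 < K) := by linarith
    have h2 : K ≠ 0 := ne_of_lt hK
    have hcsq : Real.sqrt |K| * Real.sqrt |K| = |K| :=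
      Real.mul_self_sqrt (abs_nonneg K)
    have hc : Real.sqrt |K| ≠ 0 := by
      have : 0 < |K| := abs_pos.mpr h2
      positivity
    unfold sK sKd
    simp only [if_neg h1, if_neg h2]
    have h3 : HasDerivAt (fun r : ℝ => r * Real.sqrt |K|) (Real.sqrt |K|) r := by
      simpa using (hasDerivAt_id r).mul_const (Real.sqrt |K|)
    have h4 : HasDerivAt (fun x : ℝ => Real.cosh (x * Real.sqrt |K|))
        (Real.sinh (r * Real.sqrt |K|) * Real.sqrt |K|) r := by
      exact (Real.hasDerivAt_cosh (r * Real.sqrt |K|)).comp r h3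
    have heq : -K * (Real.sinh (r * Real.sqrt |K|) / Real.sqrt |K|)
        = Real.sinh (r * Real.sqrt |K|) * Real.sqrt |K| := by
      have hcsq' : Real.sqrt |K| * Real.sqrt |K| = -K := by rw [hcsq, abs_of_neg hK]
      field_simp
      linear_combination (- Real.sinh (r * Real.sqrt |K|)) * hcsq'
    rwa [← heq] at h4
  · subst hK
    unfold sK sKd
    norm_num
    exact hasDerivAt_const r (1:ℝ)
  · have hcsq : Real.sqrt K * Real.sqrt K = K := Real.mul_self_sqrt hK.le
    have hc : Real.sqrt K ≠ 0 := by positivity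
    unfold sK sKd
    simp only [if_pos hK]
    have h3 : HasDerivAt (fun r : ℝ => r * Real.sqrt K) (Real.sqrt K) r := by
      simpa using (hasDerivAt_id r).mul_const (Real.sqrt K)
    have h4 : HasDerivAt (fun x : ℝ => Real.cos (x * Real.sqrt K))
        (-Real.sin (r * Real.sqrt K) * Real.sqrt K) r := by
      exact (Real.hasDerivAt_cos (r * Real.sqrt K)).comp r h3
    have heq : -K * (Real.sin (r * Real.sqrt K) / Real.sqrt K)
        = -Real.sin (r * Real.sqrt K) * Real.sqrt K := by
      field_simp
      linear_combination (Real.sin (r * Real.sqrt K)) * hcsq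
    rwa [← heq] at h4

lemma sK_zero (K : ℝ) : sK K 0 = 0 := by
  unfold sK
  rcases lt_trichotomy K 0 with hK | hK | hK
  · simp [not_lt.mpr hK.le, ne_of_lt hK]
  · simp [hK]
  · simp [hK]

lemma sKd_zero (K : ℝ) : sKd K 0 = 1 := by
  unfold sKd
  rcases lt_trichotomy K 0 with hK | hK | hK
  · simp [not_lt.mpr hK.le, ne_of_lt hK]
  · simp [hK]
  · simp [hK]

lemma phiKH_eq (K H : ℝ) : phiKH K H = fun r => sKd K r - H * sK K r := by
  funext r
  simp only [phiKH, (hasDerivAt_sK K r).deriv]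

/-- if `w` is twice continuously differentiable on `[0,T]` with `w(0) = 1`,
`w'(0) ≤ −H`, `w'' + K w ≤ 0` on `[0,T]` and `w > 0` on `[0,T)`, then `φ_{K,H} > 0`
on `[0,T)`. -/
theorem phi_positive_of_positive_solution (K H T : ℝ) (hT : 0 < T)
    (w w' w'' : ℝ → ℝ)
    (hw' : ∀ r ∈ Set.Icc 0 T, HasDerivWithinAt w (w' r) (Set.Icc 0 T) r)
    (hw'' : ∀ r ∈ Set.Icc 0 T, HasDerivWithinAt w' (w'' r) (Set.Icc 0 T) r)
    (hw''cont : ContinuousOn w'' (Set.Icc 0 T))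
    (hw0 : w 0 = 1) (hw'0 : w' 0 ≤ -H)
    (hineq : ∀ r ∈ Set.Icc 0 T, w'' r + K * w r ≤ 0)
    (hwpos : ∀ r ∈ Set.Ico 0 T, 0 < w r) :
    ∀ r ∈ Set.Ico 0 T, 0 < phiKH K H r := by
  set φ : ℝ → ℝ := phiKH K H with hφdef
  set φ' : ℝ → ℝ := fun x => -K * sK K x - H * sKd K x with hφ'def
  have hφd : ∀ x, HasDerivAt φ (φ' x) x := by
    intro x
    rw [hφdef, phiKH_eq]
    exact (hasDerivAt_sKd K x).sub ((hasDerivAt_sK K x).const_mul H)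
  have hφ'd : ∀ x, HasDerivAt φ' (-K * φ x) x := by
    intro x
    have h1 : HasDerivAt φ' (-K * sKd K x - H * (-K * sK K x)) x :=
      ((hasDerivAt_sK K x).const_mul (-K)).sub ((hasDerivAt_sKd K x).const_mul H)
    convert h1 using 1
    rw [hφdef, phiKH_eq]; ring
  have hφcont : Continuous φ := by
    have : Differentiable ℝ φ := fun x => (hφd x).differentiableAt
    exact this.continuous
  have hφ'cont : Continuous φ' := by
    have : Differentiable ℝ φ' := fun x => (hφ'd x).differentiableAt
    exact this.continuous
  have hφ0 : φ 0 = 1 := by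
    rw [hφdef, phiKH_eq]; simp [sK_zero, sKd_zero]
  have hφ'0 : φ' 0 = -H := by
    simp [hφ'def, sK_zero, sKd_zero]
  by_contra hcon
  push_neg at hcon
  obtain ⟨r, hr, hφr⟩ := hcon
  set A : Set ℝ := Set.Icc 0 r ∩ {x | φ x ≤ 0} with hA
  have hAne : A.Nonempty := ⟨r, ⟨hr.1, le_refl r⟩, hφr⟩
  have hAbdd : BddBelow A := ⟨0, fun x hx => hx.1.1⟩
  have hAclosed : IsClosed A :=
    isClosed_Icc.inter (isClosed_le hφcont continuous_const)
  set r₀ := sInf A with hr₀def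
  have hr₀A : r₀ ∈ A := hAclosed.csInf_mem hAne hAbdd
  have hr₀0 : 0 ≤ r₀ := hr₀A.1.1
  have hr₀r : r₀ ≤ r := hr₀A.1.2
  have hr₀T : r₀ < T := lt_of_le_of_lt hr₀r hr.2
  have hφr₀ : φ r₀ ≤ 0 := hr₀A.2
  have hr₀pos : 0 < r₀ := by
    rcases hr₀0.lt_or_eq with h | h
    · exact h
    · exfalso; rw [← h, hφ0] at hφr₀; linarith
  have hφpos : ∀ x ∈ Set.Ico (0:ℝ) r₀, 0 < φ x := by
    intro x hx
    by_contra hle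
    push_neg at hle
    have hxA : x ∈ A := ⟨⟨hx.1, le_trans hx.2.le hr₀r⟩, hle⟩
    have := csInf_le hAbdd hxA
    have := hx.2
    linarith
  have hIccsub : Set.Icc (0:ℝ) r₀ ⊆ Set.Icc 0 T := Set.Icc_subset_Icc le_rfl hr₀T.le
  have hwcont : ContinuousOn w (Set.Icc 0 T) := fun x hx => (hw' x hx).continuousWithinAt
  have hw'cont : ContinuousOn w' (Set.Icc 0 T) := fun x hx => (hw'' x hx).continuousWithinAt
  have hmem : ∀ x ∈ Set.Ioo (0:ℝ) r₀, Set.Icc 0 T ∈ nhds x := fun x hx =>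
    Icc_mem_nhds hx.1 (lt_trans hx.2 hr₀T)
  have hwD : ∀ x ∈ Set.Ioo (0:ℝ) r₀, HasDerivAt w (w' x) x := fun x hx =>
    (hw' x ⟨hx.1.le, (lt_trans hx.2 hr₀T).le⟩).hasDerivAt (hmem x hx)
  have hw'D : ∀ x ∈ Set.Ioo (0:ℝ) r₀, HasDerivAt w' (w'' x) x := fun x hx =>
    (hw'' x ⟨hx.1.le, (lt_trans hx.2 hr₀T).le⟩).hasDerivAt (hmem x hx)
  have hwposIcc : ∀ x ∈ Set.Icc (0:ℝ) r₀, 0 < w x := fun x hx =>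
    hwpos x ⟨hx.1, lt_of_le_of_lt hx.2 hr₀T⟩
  -- the Wronskian-type function
  set V : ℝ → ℝ := fun x => φ' x * w x - φ x * w' x with hVdef
  have hVcont : ContinuousOn V (Set.Icc 0 r₀) :=
    (hφ'cont.continuousOn.mul (hwcont.mono hIccsub)).sub
      (hφcont.continuousOn.mul (hw'cont.mono hIccsub))
  have hVD : ∀ x ∈ Set.Ioo (0:ℝ) r₀,
      HasDerivAt V (-(φ x) * (w'' x + K * w x)) x := by
    intro x hx
    have h1 : HasDerivAt V ((-K * φ x) * w x + φ' x * w' x -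
        (φ' x * w' x + φ x * w'' x)) x :=
      ((hφ'd x).mul (hwD x hx)).sub ((hφd x).mul (hw'D x hx))
    convert h1 using 1
    ring
  have hVmono : MonotoneOn V (Set.Icc 0 r₀) := by
    apply monotoneOn_of_deriv_nonneg (convex_Icc _ _) hVcont
    · intro x hx
      rw [interior_Icc] at hx
      exact (hVD x hx).differentiableAt.differentiableWithinAt
    · intro x hx
      rw [interior_Icc] at hx
      rw [(hVD x hx).deriv]
      have h1 : 0 < φ x := hφpos x ⟨hx.1.le, hx.2⟩
      have h2 : w'' x + K * w x ≤ 0 := hineq x (hIccsub ⟨hx.1.le, hx.2.le⟩)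
      nlinarith
  have hV0 : 0 ≤ V 0 := by
    simp only [hVdef, hφ0, hφ'0, hw0]
    linarith
  have hVnonneg : ∀ x ∈ Set.Icc (0:ℝ) r₀, 0 ≤ V x := fun x hx =>
    le_trans hV0 (hVmono ⟨le_rfl, hr₀0⟩ hx hx.1)
  -- the quotient function
  set g : ℝ → ℝ := fun x => φ x / w x with hgdef
  have hgcont : ContinuousOn g (Set.Icc 0 r₀) :=
    hφcont.continuousOn.div (hwcont.mono hIccsub) (fun x hx => (hwposIcc x hx).ne')
  have hgD : ∀ x ∈ Set.Ioo (0:ℝ) r₀, HasDerivAt g (V x / (w x) ^ 2) x := by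
    intro x hx
    exact (hφd x).div (hwD x hx) (hwposIcc x ⟨hx.1.le, hx.2.le⟩).ne'
  have hgmono : MonotoneOn g (Set.Icc 0 r₀) := by
    apply monotoneOn_of_deriv_nonneg (convex_Icc _ _) hgcont
    · intro x hx
      rw [interior_Icc] at hx
      exact (hgD x hx).differentiableAt.differentiableWithinAt
    · intro x hx
      rw [interior_Icc] at hx
      rw [(hgD x hx).deriv]
      exact div_nonneg (hVnonneg x ⟨hx.1.le, hx.2.le⟩) (sq_nonneg _)
  have h01 : g 0 ≤ g r₀ := hgmono ⟨le_rfl, hr₀0⟩ ⟨hr₀0, le_rfl⟩ hr₀0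
  have hg0 : g 0 = 1 := by simp [hgdef, hφ0, hw0]
  rw [hg0] at h01
  have hwr₀ : 0 < w r₀ := hwposIcc r₀ ⟨hr₀0, le_rfl⟩
  rw [hgdef] at h01
  rw [one_le_div hwr₀] at h01
  linarith
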